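/- arXiv:1310.4731 — 4 statements merged into one kernel-verified Lean document; each statement's English description precedes it below -/
import Mathlib

section
/- Under assumptions (A1)–(A6), the map m := m̂|_{S⁺} : S⁺ → N, where S⁺ = {u ∈ X⁺ : ‖u‖ = 1}, is a homeomorphism from S⁺ onto the Nehari–Pankov manifold N (both with the norm topology), whose inverse is the map N → S⁺, v ↦ v⁺/‖v⁺‖. -/
/-!
The algebraic half is bookkeeping with (A5): `m(u)⁺ = t u` with `t ≥ δ > 0`, and every `v ∈ N`
is a nontrivial critical point of `J` on `X(v⁺/‖v⁺‖)`, hence equals `m(v⁺/‖v⁺‖)` by uniqueness.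

Continuity of `m` is the real content. For `uₙ → u` on `S⁺`, (A6) bounds `m(uₙ)`, so by
reflexivity a subsequence T-converges to some `w ∈ X̂(u)`. Maximality of `m(uₙ)` on `X̂(uₙ)` gives
`liminf J(m(uₙ)) ≥ J(m(u))`, while (A2) gives `limsup J(m(uₙ)) ≤ J(w) ≤ J(m(u))`. Hence `w = m(u)`
by strict maximality, `I(m(uₙ)) → I(w)`, and (A3) upgrades T-convergence to norm convergence.
-/

open Filter Topology

section WeakCompactness

variable {X : Type*} [NormedAddCommGroup X] [NormedSpace ℝ X]

theorem exists_seq_dual_ne_zero_of_isSeparable {s : Set X} (hs : TopologicalSpace.IsSeparable s) :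
    ∃ φ : ℕ → StrongDual ℝ X, ∀ x ∈ s, x ≠ 0 → ∃ j, φ j x ≠ 0 := by
  obtain ⟨c, hc, hsc⟩ := hs
  obtain ⟨g, hcg⟩ := Set.countable_iff_exists_subset_range.mp hc
  choose φ hφ1 hφg using fun j => exists_dual_vector'' ℝ (g j)
  refine ⟨φ, fun x hx hx0 => ?_⟩
  obtain ⟨j, hj⟩ := Metric.mem_closure_range_iff.mp (closure_mono hcg (hsc hx)) (‖x‖ / 2)
    (half_pos (norm_pos_iff.mpr hx0))
  rw [dist_eq_norm] at hj
  refine ⟨j, (?_ : 0 < φ j x).ne'⟩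
  -- `φ j` is norming at `g j`, and `g j` is within `‖x‖ / 2` of `x`
  have hg : φ j (g j) = ‖g j‖ := by simpa using hφg j
  have hle : |φ j (x - g j)| ≤ ‖x - g j‖ :=
    ((φ j).le_opNorm _).trans (mul_le_of_le_one_left (norm_nonneg _) (hφ1 j))
  have hsplit : φ j x = ‖g j‖ + φ j (x - g j) := by rw [map_sub, hg]; ring
  linarith [neg_abs_le (φ j (x - g j)), norm_le_norm_sub_add x (g j)]

theorem Convex.mem_of_forall_dual_tendsto {s : Set X} (hs : Convex ℝ s) (hsc : IsClosed s)
    {v : ℕ → X} (hv : ∀ n, v n ∈ s) {w : X}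
    (hw : ∀ φ : StrongDual ℝ X, Tendsto (fun n => φ (v n)) atTop (𝓝 (φ w))) : w ∈ s := by
  by_contra hws
  obtain ⟨φ, c, hφs, hφw⟩ := geometric_hahn_banach_closed_point hs hsc hws
  exact hφw.not_ge (le_of_tendsto' (hw φ) fun n => (hφs _ (hv n)).le)

theorem exists_subseq_forall_dual_tendsto_of_isBounded
    (hrefl : Function.Surjective (NormedSpace.inclusionInDoubleDual ℝ X))
    {v : ℕ → X} (hv : Bornology.IsBounded (Set.range v)) :
    ∃ σ : ℕ → ℕ, StrictMono σ ∧ ∃ w : X,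
      ∀ φ : StrongDual ℝ X, Tendsto (fun n => φ (v (σ n))) atTop (𝓝 (φ w)) := by
  -- The weak closure `K` of the sequence is compact (Banach–Alaoglu in the bidual) and lies in
  -- the separable subspace `Z`, on which countably many functionals separate points; so `K` is
  -- metrizable, hence sequentially compact.
  let Z := (Submodule.span ℝ (Set.range v)).topologicalClosure
  obtain ⟨φ, hφ⟩ := exists_seq_dual_ne_zero_of_isSeparable
    (((Set.countable_range v).isSeparable.span (R := ℝ)).closure.mono
      (Submodule.topologicalClosure_coe _).le)
  let e := toWeakSpace ℝ X
  set K : Set (WeakSpace ℝ X) := closure (e '' Set.range v)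
  have hK : IsCompact K := NormedSpace.isCompact_closure_of_isBounded ℝ X _
    (by rwa [Set.preimage_image_eq _ e.injective]) (fun x _ => hrefl x)
  have hKZ : K ⊆ e '' Z := by
    have hvZ : Set.range v ⊆ Z := fun x hx =>
      Submodule.le_topologicalClosure _ (Submodule.subset_span hx)
    calc K ⊆ closure (e '' Z) := closure_mono (Set.image_mono hvZ)
      _ = e '' closure Z := (Z.convex.toWeakSpace_closure ℝ).symm
      _ = e '' Z := by rw [(Submodule.isClosed_topologicalClosure _).closure_eq]
  have : CompactSpace K := isCompact_iff_compactSpace.mp hK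
  have hval : Continuous (Subtype.val : K → WeakSpace ℝ X) := continuous_subtype_val
  have : TopologicalSpace.MetrizableSpace K :=
    Metric.PiNatEmbed.TopologicalSpace.MetrizableSpace.of_countable_separating
      (fun j (k : K) => φ j (e.symm k))
      (fun j => (WeakBilin.eval_continuous _ (φ j)).comp hval)
      (fun k₁ k₂ hne => by
        obtain ⟨z₁, hz₁, hk₁⟩ := hKZ k₁.2
        obtain ⟨z₂, hz₂, hk₂⟩ := hKZ k₂.2
        have hz : z₁ - z₂ ≠ 0 :=
          sub_ne_zero.mpr fun h => hne (Subtype.ext (by rw [← hk₁, ← hk₂, h]))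
        obtain ⟨j, hj⟩ := hφ _ (Z.sub_mem hz₁ hz₂) hz
        refine ⟨j, fun h => hj ?_⟩
        simp only [← hk₁, ← hk₂, LinearEquiv.symm_apply_apply] at h
        rw [map_sub, h, sub_self])
  obtain ⟨k, σ, hσ, hk⟩ := CompactSpace.tendsto_subseq
    (fun n => (⟨e (v n), subset_closure ⟨v n, ⟨n, rfl⟩, rfl⟩⟩ : K))
  exact ⟨σ, hσ, e.symm k, fun ψ =>
    ((WeakBilin.eval_continuous _ ψ).comp hval).continuousAt.tendsto.comp hk⟩

end WeakCompactness

theorem continuousWithinAt_of_forall_exists_subseq {α β : Type*} [TopologicalSpace α]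
    [FirstCountableTopology α] [TopologicalSpace β] {f : α → β} {s : Set α} {a : α}
    (h : ∀ x : ℕ → α, (∀ n, x n ∈ s) → Tendsto x atTop (𝓝 a) →
      ∃ σ : ℕ → ℕ, Tendsto (fun n => f (x (σ n))) atTop (𝓝 (f a))) :
    ContinuousWithinAt f s a := by
  refine tendsto_of_subseq_tendsto fun x hx => ?_
  obtain ⟨N, hN⟩ := eventually_atTop.mp (hx.eventually self_mem_nhdsWithin)
  obtain ⟨σ, hσ⟩ := h (fun n => x (n + N)) (fun n => hN _ (Nat.le_add_left N n))
    ((hx.mono_right nhdsWithin_le_nhds).comp (tendsto_add_atTop_nat N))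
  exact ⟨fun n => σ n + N, hσ⟩

section NehariPankov

variable {X : Type*} [NormedAddCommGroup X] [NormedSpace ℝ X]

/-- The paper's T-convergence `x n →_T v`. -/
def TTendsto (P : X →L[ℝ] X) (x : ℕ → X) (v : X) : Prop :=
  Tendsto (fun n => P (x n)) atTop (𝓝 (P v)) ∧
    ∀ φ : X →L[ℝ] ℝ, Tendsto (fun n => φ (x n - P (x n))) atTop (𝓝 (φ (v - P v)))

def unitSphereIn (Xp : Submodule ℝ X) : Set X := {u | u ∈ Xp ∧ ‖u‖ = 1}

def nehariPankov (Xt : Submodule ℝ X) (J' : X → X →L[ℝ] ℝ) : Set X :=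
  {u | u ∉ Xt ∧ J' u u = 0 ∧ ∀ v ∈ Xt, J' u v = 0}

/-- `X(u) = ℝu ⊕ X̃`. -/
def lineAdd (Xt : Submodule ℝ X) (u : X) : Set X := {z | ∃ t : ℝ, ∃ v ∈ Xt, z = t • u + v}

/-- `X̂(u) = [0,∞)u ⊕ X̃`. -/
def rayAdd (Xt : Submodule ℝ X) (u : X) : Set X := {z | ∃ t : ℝ, 0 ≤ t ∧ ∃ v ∈ Xt, z = t • u + v}

variable {Xp Xt : Submodule ℝ X} {P : X →L[ℝ] X}

theorem proj_smul_add (hPp : ∀ x ∈ Xp, P x = x) (hPt : ∀ x ∈ Xt, P x = 0) {y v : X}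
    (hy : y ∈ Xp) (hv : v ∈ Xt) (t : ℝ) : P (t • y + v) = t • y := by
  rw [map_add, map_smul, hPp y hy, hPt v hv, add_zero]

theorem notMem_of_mem_of_ne_zero (hPp : ∀ x ∈ Xp, P x = x) (hPt : ∀ x ∈ Xt, P x = 0) {u : X}
    (hu : u ∈ Xp) (hu0 : u ≠ 0) : u ∉ Xt := fun h => hu0 (by rw [← hPp u hu, hPt u h])

theorem notMem_of_mem_unitSphereIn (hPp : ∀ x ∈ Xp, P x = x) (hPt : ∀ x ∈ Xt, P x = 0) {u : X}
    (hu : u ∈ unitSphereIn Xp) : u ∉ Xt :=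
  notMem_of_mem_of_ne_zero hPp hPt hu.1 (norm_ne_zero_iff.mp (by rw [hu.2]; exact one_ne_zero))

theorem proj_ne_zero_of_notMem (hQm : ∀ x : X, x - P x ∈ Xt) {v : X} (hv : v ∉ Xt) :
    P v ≠ 0 := fun h => hv (by simpa [h] using hQm v)

theorem inv_norm_smul_proj_mem_unitSphereIn (hPm : ∀ x : X, P x ∈ Xp) {v : X} (hv : P v ≠ 0) :
    ‖P v‖⁻¹ • P v ∈ unitSphereIn Xp :=
  ⟨Xp.smul_mem _ (hPm v),
    by rw [norm_smul, norm_inv, norm_norm, inv_mul_cancel₀ (norm_ne_zero_iff.mpr hv)]⟩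

theorem mem_nehariPankov_of_forall_lineAdd {J' : X → X →L[ℝ] ℝ} (hPt : ∀ x ∈ Xt, P x = 0)
    {u w : X} (hw : w ∈ rayAdd Xt u) (hPw : P w ≠ 0) (hcrit : ∀ z ∈ lineAdd Xt u, J' w z = 0) :
    w ∈ nehariPankov Xt J' := by
  obtain ⟨t, -, v, hv, rfl⟩ := hw
  exact ⟨fun h => hPw (hPt _ h), hcrit _ ⟨t, v, hv, rfl⟩,
    fun z hz => hcrit z ⟨0, z, hz, by rw [zero_smul, zero_add]⟩⟩

theorem inv_norm_smul_proj_of_mem_rayAdd (hPp : ∀ x ∈ Xp, P x = x) (hPt : ∀ x ∈ Xt, P x = 0)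
    {u w : X} (hu : u ∈ unitSphereIn Xp) (hw : w ∈ rayAdd Xt u) (hPw : P w ≠ 0) :
    ‖P w‖⁻¹ • P w = u := by
  obtain ⟨t, ht, v, hv, rfl⟩ := hw
  rw [proj_smul_add hPp hPt hu.1 hv] at hPw ⊢
  rw [norm_smul, hu.2, mul_one, Real.norm_of_nonneg ht, smul_smul,
    inv_mul_cancel₀ (left_ne_zero_of_smul hPw), one_smul]

theorem m_inv_norm_smul_proj {J' : X → X →L[ℝ] ℝ} {m : X → X} (hPp : ∀ x ∈ Xp, P x = x)
    (hPt : ∀ x ∈ Xt, P x = 0) (hPm : ∀ x : X, P x ∈ Xp) (hQm : ∀ x : X, x - P x ∈ Xt)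
    (hm_unique : ∀ u ∉ Xt, ∀ w ∈ rayAdd Xt u, w ≠ 0 → (∀ z ∈ lineAdd Xt u, J' w z = 0) →
      w = m u)
    {v : X} (hv : v ∈ nehariPankov Xt J') : m (‖P v‖⁻¹ • P v) = v := by
  obtain ⟨hvt, hvv, hvXt⟩ := hv
  have hPv := proj_ne_zero_of_notMem hQm hvt
  have hn : ‖P v‖ ≠ 0 := norm_ne_zero_iff.mpr hPv
  have hsplit : v = ‖P v‖ • (‖P v‖⁻¹ • P v) + (v - P v) := by
    rw [smul_smul, mul_inv_cancel₀ hn, one_smul, add_sub_cancel]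
  -- `J' v` kills `v` and `X̃`, hence also `P v = v - (v - P v)`
  have hvP : J' v (P v) = 0 := by
    rw [← sub_sub_cancel v (P v), map_sub, hvv, hvXt _ (hQm v), sub_zero]
  refine (hm_unique _ (notMem_of_mem_unitSphereIn hPp hPt
      (inv_norm_smul_proj_mem_unitSphereIn hPm hPv)) v
    ⟨‖P v‖, norm_nonneg _, v - P v, hQm v, hsplit⟩ (fun h => hvt (h ▸ Xt.zero_mem)) ?_).symm
  rintro z ⟨t, z', hz', rfl⟩
  rw [map_add, map_smul, map_smul, hvP, hvXt z' hz', smul_zero, smul_zero, add_zero]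

variable {J I : X → ℝ} {m : X → X}

theorem apply_le_apply_m_of_mem_rayAdd
    (hm_max : ∀ u ∉ Xt, ∀ w ∈ rayAdd Xt u, w ≠ m u → J w < J (m u))
    {u w : X} (hu : u ∉ Xt) (hw : w ∈ rayAdd Xt u) : J w ≤ J (m u) := by
  by_cases h : w = m u
  · rw [h]
  · exact (hm_max u hu w hw h).le

theorem lowerSemicontinuousOn_comp_m (hJc : Continuous J)
    (hm_mem : ∀ u ∉ Xt, m u ∈ rayAdd Xt u)
    (hm_max : ∀ u ∉ Xt, ∀ w ∈ rayAdd Xt u, w ≠ m u → J w < J (m u)) :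
    LowerSemicontinuousOn (J ∘ m) (Xt : Set X)ᶜ := by
  intro u hu b hb
  obtain ⟨t, ht, v, hv, hmu⟩ := hm_mem u hu
  -- near `u`, `J ∘ m` dominates the continuous function `x ↦ J (t • x + v)`
  have hg : Continuous fun x => J (t • x + v) := by fun_prop
  have hbg : b < J (t • u + v) := hmu ▸ hb
  filter_upwards [nhdsWithin_le_nhds (hg.continuousAt.eventually (lt_mem_nhds hbg)),
    self_mem_nhdsWithin] with x hbx hx
  exact hbx.trans_le (apply_le_apply_m_of_mem_rayAdd hm_max hx ⟨t, ht, v, hv, rfl⟩)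

theorem eventually_lt_of_tTendsto (hJI : ∀ x : X, J x = (1 / 2) * ‖P x‖ ^ 2 - I x)
    (hA2 : ∀ (x : ℕ → X) (v : X), TTendsto P x v → ∀ b < I v, ∀ᶠ n in atTop, b < I (x n))
    {x : ℕ → X} {v : X} (hx : TTendsto P x v) : ∀ b > J v, ∀ᶠ n in atTop, J (x n) < b := by
  intro b hb
  have hq : Tendsto (fun n => (1 / 2) * ‖P (x n)‖ ^ 2) atTop (𝓝 ((1 / 2) * ‖P v‖ ^ 2)) :=
    (hx.1.norm.pow 2).const_mul _
  rw [hJI] at hb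
  filter_upwards [hq.eventually (gt_mem_nhds (lt_add_of_pos_right _ (half_pos (sub_pos.2 hb)))),
    hA2 x v hx _ (sub_lt_self _ (half_pos (sub_pos.2 hb)))] with n h1 h2
  rw [hJI]
  linarith

theorem tendsto_of_tTendsto_of_tendsto_apply (hJI : ∀ x : X, J x = (1 / 2) * ‖P x‖ ^ 2 - I x)
    (hA3 : ∀ (x : ℕ → X) (v : X), TTendsto P x v →
      Tendsto (fun n => I (x n)) atTop (𝓝 (I v)) → Tendsto x atTop (𝓝 v))
    {x : ℕ → X} {v : X} (hx : TTendsto P x v) (hJ : Tendsto (fun n => J (x n)) atTop (𝓝 (J v))) :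
    Tendsto x atTop (𝓝 v) := by
  have hI : ∀ y, I y = (1 / 2) * ‖P y‖ ^ 2 - J y := fun y => by rw [hJI]; ring
  refine hA3 x v hx ?_
  simp only [hI]
  exact ((hx.1.norm.pow 2).const_mul _).sub hJ

theorem exists_subseq_tTendsto_smul_add
    (hrefl : Function.Surjective (NormedSpace.inclusionInDoubleDual ℝ X))
    (hXtcl : IsClosed (Xt : Set X)) (hPp : ∀ x ∈ Xp, P x = x) (hPt : ∀ x ∈ Xt, P x = 0)
    {u : X} (hu : u ∈ Xp) {y : ℕ → X} (hy : ∀ n, y n ∈ Xp) (hyu : Tendsto y atTop (𝓝 u))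
    {t : ℕ → ℝ} {T : ℝ} (ht : ∀ n, t n ∈ Set.Icc 0 T)
    {v : ℕ → X} (hv : ∀ n, v n ∈ Xt) (hvb : Bornology.IsBounded (Set.range v)) :
    ∃ σ : ℕ → ℕ, StrictMono σ ∧
      ∃ w ∈ rayAdd Xt u, TTendsto P (fun n => t (σ n) • y (σ n) + v (σ n)) w := by
  obtain ⟨σ₁, hσ₁, w, hw⟩ := exists_subseq_forall_dual_tendsto_of_isBounded hrefl hvb
  obtain ⟨t₀, ht₀, σ₂, hσ₂, htσ⟩ :=
    tendsto_subseq_of_bounded (Metric.isBounded_Icc 0 T) (fun n => ht (σ₁ n))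
  rw [isClosed_Icc.closure_eq] at ht₀
  have hwXt : w ∈ Xt := Xt.convex.mem_of_forall_dual_tendsto hXtcl (fun n => hv (σ₁ n)) hw
  have hσ := hσ₁.comp hσ₂
  refine ⟨σ₁ ∘ σ₂, hσ, t₀ • u + w, ⟨t₀, ht₀.1, w, hwXt, rfl⟩, ?_, fun φ => ?_⟩
  · simp only [Function.comp_apply, proj_smul_add hPp hPt (hy _) (hv _),
      proj_smul_add hPp hPt hu hwXt]
    exact htσ.smul (hyu.comp hσ.tendsto_atTop)
  · simp only [Function.comp_apply, proj_smul_add hPp hPt (hy _) (hv _),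
      proj_smul_add hPp hPt hu hwXt, add_sub_cancel_left]
    exact (hw φ).comp hσ₂.tendsto_atTop

theorem exists_subseq_tTendsto_m
    (hrefl : Function.Surjective (NormedSpace.inclusionInDoubleDual ℝ X))
    (hXtcl : IsClosed (Xt : Set X)) (hPp : ∀ x ∈ Xp, P x = x) (hPt : ∀ x ∈ Xt, P x = 0)
    (hm_mem : ∀ u ∉ Xt, m u ∈ rayAdd Xt u)
    (hm_bdd : ∀ K : Set X, IsCompact K → (∀ x ∈ K, x ∉ Xt) → Bornology.IsBounded (m '' K))
    {u : X} (hu : u ∈ unitSphereIn Xp) {y : ℕ → X} (hy : ∀ n, y n ∈ unitSphereIn Xp)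
    (hyu : Tendsto y atTop (𝓝 u)) :
    ∃ σ : ℕ → ℕ, StrictMono σ ∧ ∃ w ∈ rayAdd Xt u, TTendsto P (fun n => m (y (σ n))) w := by
  have hnot : ∀ x ∈ insert u (Set.range y), x ∉ Xt := by
    rintro x (rfl | ⟨n, rfl⟩)
    exacts [notMem_of_mem_unitSphereIn hPp hPt hu, notMem_of_mem_unitSphereIn hPp hPt (hy n)]
  obtain ⟨M, hM⟩ := isBounded_iff_forall_norm_le.mp (hm_bdd _ hyu.isCompact_insert_range hnot)
  have hmM : ∀ n, ‖m (y n)‖ ≤ M := fun n => hM _ ⟨y n, Set.mem_insert_of_mem _ ⟨n, rfl⟩, rfl⟩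
  choose t ht v hv hdec using fun n => hm_mem (y n) (hnot _ (Set.mem_insert_of_mem _ ⟨n, rfl⟩))
  have hty : ∀ n, ‖t n • y n‖ = t n := fun n => by
    rw [norm_smul, (hy n).2, mul_one, Real.norm_of_nonneg (ht n)]
  have htT : ∀ n, t n ∈ Set.Icc 0 (‖P‖ * M) := fun n => by
    refine ⟨ht n, ?_⟩
    calc t n = ‖P (m (y n))‖ := by rw [hdec n, proj_smul_add hPp hPt (hy n).1 (hv n), hty]
      _ ≤ ‖P‖ * M := (P.le_opNorm _).trans (by gcongr; exact hmM n)
  have hvb : Bornology.IsBounded (Set.range v) := by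
    refine isBounded_iff_forall_norm_le.mpr ⟨M + ‖P‖ * M, Set.forall_mem_range.2 fun n => ?_⟩
    calc ‖v n‖ = ‖m (y n) - t n • y n‖ := by rw [hdec n, add_sub_cancel_left]
      _ ≤ ‖m (y n)‖ + ‖t n • y n‖ := norm_sub_le _ _
      _ ≤ M + ‖P‖ * M := add_le_add (hmM n) ((hty n).trans_le (htT n).2)
  obtain ⟨σ, hσ, w, hw, hT⟩ := exists_subseq_tTendsto_smul_add hrefl hXtcl hPp hPt hu.1
    (fun n => (hy n).1) hyu htT hv hvb
  exact ⟨σ, hσ, w, hw, by simpa only [← hdec] using hT⟩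

theorem exists_subseq_tendsto_m
    (hrefl : Function.Surjective (NormedSpace.inclusionInDoubleDual ℝ X))
    (hXtcl : IsClosed (Xt : Set X)) (hPp : ∀ x ∈ Xp, P x = x) (hPt : ∀ x ∈ Xt, P x = 0)
    (hJc : Continuous J) (hJI : ∀ x : X, J x = (1 / 2) * ‖P x‖ ^ 2 - I x)
    (hA2 : ∀ (x : ℕ → X) (v : X), TTendsto P x v → ∀ b < I v, ∀ᶠ n in atTop, b < I (x n))
    (hA3 : ∀ (x : ℕ → X) (v : X), TTendsto P x v →
      Tendsto (fun n => I (x n)) atTop (𝓝 (I v)) → Tendsto x atTop (𝓝 v))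
    (hm_mem : ∀ u ∉ Xt, m u ∈ rayAdd Xt u)
    (hm_max : ∀ u ∉ Xt, ∀ w ∈ rayAdd Xt u, w ≠ m u → J w < J (m u))
    (hm_bdd : ∀ K : Set X, IsCompact K → (∀ x ∈ K, x ∉ Xt) → Bornology.IsBounded (m '' K))
    {u : X} (hu : u ∈ unitSphereIn Xp) {y : ℕ → X} (hy : ∀ n, y n ∈ unitSphereIn Xp)
    (hyu : Tendsto y atTop (𝓝 u)) :
    ∃ σ : ℕ → ℕ, Tendsto (fun n => m (y (σ n))) atTop (𝓝 (m u)) := by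
  have hu' := notMem_of_mem_unitSphereIn hPp hPt hu
  obtain ⟨σ, hσ, w, hw, hT⟩ := exists_subseq_tTendsto_m hrefl hXtcl hPp hPt hm_mem hm_bdd hu hy hyu
  have hyσ : Tendsto (fun n => y (σ n)) atTop (𝓝[(Xt : Set X)ᶜ] u) :=
    tendsto_nhdsWithin_iff.2 ⟨hyu.comp hσ.tendsto_atTop,
      .of_forall fun n => notMem_of_mem_unitSphereIn hPp hPt (hy _)⟩
  have hlow : ∀ b < J (m u), ∀ᶠ n in atTop, b < J (m (y (σ n))) := fun b hb =>
    hyσ.eventually (lowerSemicontinuousOn_comp_m hJc hm_mem hm_max u hu' b hb)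
  have hup := eventually_lt_of_tTendsto hJI hA2 hT
  -- `hlow` and `hup` squeeze `J (m (y (σ n)))` between `J (m u)` and `J w ≤ J (m u)`
  have hle : J (m u) ≤ J w := by
    by_contra! hlt
    obtain ⟨b, hwb, hbu⟩ := exists_between hlt
    obtain ⟨n, h1, h2⟩ := ((hlow b hbu).and (hup b hwb)).exists
    exact h1.asymm h2
  obtain rfl : w = m u := by
    by_contra hne
    exact (hm_max u hu' w hw hne).not_ge hle
  exact ⟨σ, tendsto_of_tTendsto_of_tendsto_apply hJI hA3 hT (tendsto_order.2 ⟨hlow, hup⟩)⟩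

theorem continuousOn_m
    (hrefl : Function.Surjective (NormedSpace.inclusionInDoubleDual ℝ X))
    (hXtcl : IsClosed (Xt : Set X)) (hPp : ∀ x ∈ Xp, P x = x) (hPt : ∀ x ∈ Xt, P x = 0)
    (hJc : Continuous J) (hJI : ∀ x : X, J x = (1 / 2) * ‖P x‖ ^ 2 - I x)
    (hA2 : ∀ (x : ℕ → X) (v : X), TTendsto P x v → ∀ b < I v, ∀ᶠ n in atTop, b < I (x n))
    (hA3 : ∀ (x : ℕ → X) (v : X), TTendsto P x v →
      Tendsto (fun n => I (x n)) atTop (𝓝 (I v)) → Tendsto x atTop (𝓝 v))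
    (hm_mem : ∀ u ∉ Xt, m u ∈ rayAdd Xt u)
    (hm_max : ∀ u ∉ Xt, ∀ w ∈ rayAdd Xt u, w ≠ m u → J w < J (m u))
    (hm_bdd : ∀ K : Set X, IsCompact K → (∀ x ∈ K, x ∉ Xt) → Bornology.IsBounded (m '' K)) :
    ContinuousOn m (unitSphereIn Xp) := fun _ hu =>
  continuousWithinAt_of_forall_exists_subseq fun _ hy hyu =>
    exists_subseq_tendsto_m hrefl hXtcl hPp hPt hJc hJI hA2 hA3 hm_mem hm_max hm_bdd hu hy hyu

end NehariPankov

theorem nehari_homeomorphism_general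
    {X : Type*} [NormedAddCommGroup X] [NormedSpace ℝ X]
    -- X is reflexive
    (hrefl : Function.Surjective (NormedSpace.inclusionInDoubleDual ℝ X))
    -- topological direct sum decomposition X = X⁺ ⊕ X̃, with projection P onto X⁺ along X̃
    (Xp Xt : Submodule ℝ X)
    (hXtcl : IsClosed (Xt : Set X))
    (P : X →L[ℝ] X)
    (hPm : ∀ x : X, P x ∈ Xp) (hQm : ∀ x : X, x - P x ∈ Xt)
    (hPp : ∀ x ∈ Xp, P x = x) (hPt : ∀ x ∈ Xt, P x = 0)
    -- J, I of class C¹ with J(u) = ½‖u⁺‖² - I(u)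
    (J I : X → ℝ) (J' : X → X →L[ℝ] ℝ)
    (hJd : ∀ x, HasFDerivAt J (J' x) x)
    (hJI : ∀ x : X, J x = (1 / 2) * ‖P x‖ ^ 2 - I x)
    -- (A2) : T-convergence implies liminf I(uₙ) ≥ I(v)
    (hA2 : ∀ (u : ℕ → X) (v : X),
      Tendsto (fun n => P (u n)) atTop (𝓝 (P v)) →
      (∀ φ : X →L[ℝ] ℝ, Tendsto (fun n => φ (u n - P (u n))) atTop (𝓝 (φ (v - P v)))) →
      ∀ b : ℝ, b < I v → ∀ᶠ n in atTop, b < I (u n))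
    -- (A3)
    (hA3 : ∀ (u : ℕ → X) (v : X),
      Tendsto (fun n => P (u n)) atTop (𝓝 (P v)) →
      (∀ φ : X →L[ℝ] ℝ, Tendsto (fun n => φ (u n - P (u n))) atTop (𝓝 (φ (v - P v)))) →
      Tendsto (fun n => I (u n)) atTop (𝓝 (I v)) →
      Tendsto u atTop (𝓝 v))
    -- (A5) : m̂(u) is the unique nontrivial critical point of J|_{X(u)} in X̂(u), and the
    -- unique global maximum of J on X̂(u)
    (m : X → X)
    (hm_mem : ∀ u ∉ Xt, ∃ t : ℝ, 0 ≤ t ∧ ∃ v ∈ Xt, m u = t • u + v)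
    (hm_crit : ∀ u ∉ Xt, ∀ z : X, (∃ t : ℝ, ∃ v ∈ Xt, z = t • u + v) → J' (m u) z = 0)
    (hm_unique : ∀ u ∉ Xt, ∀ w : X, (∃ t : ℝ, 0 ≤ t ∧ ∃ v ∈ Xt, w = t • u + v) → w ≠ 0 →
      (∀ z : X, (∃ t : ℝ, ∃ v ∈ Xt, z = t • u + v) → J' w z = 0) → w = m u)
    (hm_max : ∀ u ∉ Xt, ∀ w : X, (∃ t : ℝ, 0 ≤ t ∧ ∃ v ∈ Xt, w = t • u + v) →
      w ≠ m u → J w < J (m u))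
    -- (A6)
    (δ : ℝ) (hδ : 0 < δ) (hm_lb : ∀ u ∉ Xt, δ ≤ ‖P (m u)‖)
    (hm_bdd : ∀ K : Set X, IsCompact K → (∀ x ∈ K, x ∉ Xt) →
      Bornology.IsBounded (m '' K))
    :
    (∀ u ∈ {u : X | u ∈ Xp ∧ ‖u‖ = 1}, m u ∈ {u : X | u ∉ Xt ∧ J' u u = 0 ∧ ∀ v ∈ Xt, J' u v = 0}) ∧
    ContinuousOn m {u : X | u ∈ Xp ∧ ‖u‖ = 1} ∧
    (∀ v ∈ {u : X | u ∉ Xt ∧ J' u u = 0 ∧ ∀ v ∈ Xt, J' u v = 0}, ‖P v‖⁻¹ • P v ∈ {u : X | u ∈ Xp ∧ ‖u‖ = 1}) ∧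
    ContinuousOn (fun v : X => ‖P v‖⁻¹ • P v) {u : X | u ∉ Xt ∧ J' u u = 0 ∧ ∀ v ∈ Xt, J' u v = 0} ∧
    (∀ u ∈ {u : X | u ∈ Xp ∧ ‖u‖ = 1}, ‖P (m u)‖⁻¹ • P (m u) = u) ∧
    (∀ v ∈ {u : X | u ∉ Xt ∧ J' u u = 0 ∧ ∀ v ∈ Xt, J' u v = 0}, m (‖P v‖⁻¹ • P v) = v) := by
  have hJc : Continuous J := continuous_iff_continuousAt.2 fun x => (hJd x).continuousAt
  have hPm_ne : ∀ u ∉ Xt, P (m u) ≠ 0 := fun u hu => norm_pos_iff.mp (hδ.trans_le (hm_lb u hu))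
  refine ⟨fun u hu => ?_, continuousOn_m hrefl hXtcl hPp hPt hJc hJI (fun x v h => hA2 x v h.1 h.2)
      (fun x v h => hA3 x v h.1 h.2) hm_mem hm_max hm_bdd,
    fun v hv => inv_norm_smul_proj_mem_unitSphereIn hPm (proj_ne_zero_of_notMem hQm hv.1),
    fun v hv => ?_, fun u hu => ?_, fun v hv => m_inv_norm_smul_proj hPp hPt hPm hQm hm_unique hv⟩
  · have hu' := notMem_of_mem_unitSphereIn hPp hPt hu
    exact mem_nehariPankov_of_forall_lineAdd hPt (hm_mem u hu') (hPm_ne u hu') (hm_crit u hu')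
  · have hPv := norm_ne_zero_iff.2 (proj_ne_zero_of_notMem hQm hv.1)
    exact ((P.continuous.norm.continuousAt.inv₀ hPv).smul
      P.continuous.continuousAt).continuousWithinAt
  · have hu' := notMem_of_mem_unitSphereIn hPp hPt hu
    exact inv_norm_smul_proj_of_mem_rayAdd hPp hPt hu (hm_mem u hu') (hPm_ne u hu')

/-- Under (A1)–(A6), `m := m̂|_{S⁺} : S⁺ → N` is a homeomorphism from the
unit sphere `S⁺` of `X⁺` onto the Nehari–Pankov manifold `N`, with inverse `v ↦ v⁺/‖v⁺‖`. -/
theorem nehari_homeomorphism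
    {X : Type*} [NormedAddCommGroup X] [NormedSpace ℝ X] [CompleteSpace X]
    -- X is reflexive
    (hrefl : Function.Surjective (NormedSpace.inclusionInDoubleDual ℝ X))
    -- topological direct sum decomposition X = X⁺ ⊕ X̃, with projection P onto X⁺ along X̃
    (Xp Xt : Submodule ℝ X)
    (hXpcl : IsClosed (Xp : Set X)) (hXtcl : IsClosed (Xt : Set X))
    (P : X →L[ℝ] X)
    (hPm : ∀ x : X, P x ∈ Xp) (hQm : ∀ x : X, x - P x ∈ Xt)
    (hPp : ∀ x ∈ Xp, P x = x) (hPt : ∀ x ∈ Xt, P x = 0)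
    -- ‖u‖² = ‖u⁺‖² + ‖ũ‖²
    (hnorm : ∀ x : X, ‖x‖ ^ 2 = ‖P x‖ ^ 2 + ‖x - P x‖ ^ 2)
    -- u ↦ ‖u‖² is C¹ on X⁺
    (hC1 : ContDiffOn ℝ 1 (fun x : X => ‖x‖ ^ 2) (Xp : Set X))
    -- J, I of class C¹ with J(u) = ½‖u⁺‖² - I(u)
    (J I : X → ℝ) (J' I' : X → X →L[ℝ] ℝ)
    (hJd : ∀ x, HasFDerivAt J (J' x) x) (hJ'c : Continuous J')
    (hId : ∀ x, HasFDerivAt I (I' x) x) (hI'c : Continuous I')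
    (hJI : ∀ x : X, J x = (1 / 2) * ‖P x‖ ^ 2 - I x)
    -- (A1)
    (hI0 : I 0 = 0) (hIpos : ∀ x : X, 0 ≤ I x)
    -- (A2) : T-convergence implies liminf I(uₙ) ≥ I(v)
    (hA2 : ∀ (u : ℕ → X) (v : X),
      Tendsto (fun n => P (u n)) atTop (𝓝 (P v)) →
      (∀ φ : X →L[ℝ] ℝ, Tendsto (fun n => φ (u n - P (u n))) atTop (𝓝 (φ (v - P v)))) →
      ∀ b : ℝ, b < I v → ∀ᶠ n in atTop, b < I (u n))
    -- (A3)
    (hA3 : ∀ (u : ℕ → X) (v : X),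
      Tendsto (fun n => P (u n)) atTop (𝓝 (P v)) →
      (∀ φ : X →L[ℝ] ℝ, Tendsto (fun n => φ (u n - P (u n))) atTop (𝓝 (φ (v - P v)))) →
      Tendsto (fun n => I (u n)) atTop (𝓝 (I v)) →
      Tendsto u atTop (𝓝 v))
    -- (A4)
    (r a : ℝ) (hr : 0 < r)
    (ha_def : a = sInf (J '' {x : X | x ∈ Xp ∧ ‖x‖ = r})) (ha : 0 < a)
    -- (A5) : m̂(u) is the unique nontrivial critical point of J|_{X(u)} in X̂(u), and the
    -- unique global maximum of J on X̂(u)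
    (m : X → X)
    (hm_mem : ∀ u ∉ Xt, ∃ t : ℝ, 0 ≤ t ∧ ∃ v ∈ Xt, m u = t • u + v)
    (hm_ne : ∀ u ∉ Xt, m u ≠ 0)
    (hm_crit : ∀ u ∉ Xt, ∀ z : X, (∃ t : ℝ, ∃ v ∈ Xt, z = t • u + v) → J' (m u) z = 0)
    (hm_unique : ∀ u ∉ Xt, ∀ w : X, (∃ t : ℝ, 0 ≤ t ∧ ∃ v ∈ Xt, w = t • u + v) → w ≠ 0 →
      (∀ z : X, (∃ t : ℝ, ∃ v ∈ Xt, z = t • u + v) → J' w z = 0) → w = m u)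
    (hm_max : ∀ u ∉ Xt, ∀ w : X, (∃ t : ℝ, 0 ≤ t ∧ ∃ v ∈ Xt, w = t • u + v) →
      w ≠ m u → J w < J (m u))
    -- (A6)
    (δ : ℝ) (hδ : 0 < δ) (hm_lb : ∀ u ∉ Xt, δ ≤ ‖P (m u)‖)
    (hm_bdd : ∀ K : Set X, IsCompact K → (∀ x ∈ K, x ∉ Xt) →
      Bornology.IsBounded (m '' K))
    :
    (∀ u ∈ {u : X | u ∈ Xp ∧ ‖u‖ = 1}, m u ∈ {u : X | u ∉ Xt ∧ J' u u = 0 ∧ ∀ v ∈ Xt, J' u v = 0}) ∧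
    ContinuousOn m {u : X | u ∈ Xp ∧ ‖u‖ = 1} ∧
    (∀ v ∈ {u : X | u ∉ Xt ∧ J' u u = 0 ∧ ∀ v ∈ Xt, J' u v = 0}, ‖P v‖⁻¹ • P v ∈ {u : X | u ∈ Xp ∧ ‖u‖ = 1}) ∧
    ContinuousOn (fun v : X => ‖P v‖⁻¹ • P v) {u : X | u ∉ Xt ∧ J' u u = 0 ∧ ∀ v ∈ Xt, J' u v = 0} ∧
    (∀ u ∈ {u : X | u ∈ Xp ∧ ‖u‖ = 1}, ‖P (m u)‖⁻¹ • P (m u) = u) ∧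
    (∀ v ∈ {u : X | u ∉ Xt ∧ J' u u = 0 ∧ ∀ v ∈ Xt, J' u v = 0}, m (‖P v‖⁻¹ • P v) = v) :=
  nehari_homeomorphism_general hrefl Xp Xt hXtcl P hPm hQm hPp hPt J I J' hJd hJI hA2 hA3 m hm_mem
    hm_crit hm_unique hm_max δ hδ hm_lb hm_bdd
end

section
/- Assume (A4) and (A5). Then inf_N J ≥ a > 0 = J(0), where a = inf{J(u) : u ∈ X⁺, ‖u‖ = r} is the positive constant from (A4) and N is the Nehari–Pankov manifold of J. -/
open Filter Topology

/-- Under (A4) and (A5), `inf_N J ≥ a > 0 = J(0)`, where `N` is the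
Nehari–Pankov manifold of `J`. -/
theorem inf_nehari_positive
    {X : Type*} [NormedAddCommGroup X] [NormedSpace ℝ X] [CompleteSpace X]
    -- X is reflexive
    (hrefl : Function.Surjective (NormedSpace.inclusionInDoubleDual ℝ X))
    -- topological direct sum decomposition X = X⁺ ⊕ X̃, with projection P onto X⁺ along X̃
    (Xp Xt : Submodule ℝ X)
    (hXpcl : IsClosed (Xp : Set X)) (hXtcl : IsClosed (Xt : Set X))
    (P : X →L[ℝ] X)
    (hPm : ∀ x : X, P x ∈ Xp) (hQm : ∀ x : X, x - P x ∈ Xt)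
    (hPp : ∀ x ∈ Xp, P x = x) (hPt : ∀ x ∈ Xt, P x = 0)
    -- ‖u‖² = ‖u⁺‖² + ‖ũ‖²
    (hnorm : ∀ x : X, ‖x‖ ^ 2 = ‖P x‖ ^ 2 + ‖x - P x‖ ^ 2)
    -- J, I of class C¹ with J(u) = ½‖u⁺‖² - I(u)
    (J I : X → ℝ) (J' I' : X → X →L[ℝ] ℝ)
    (hJd : ∀ x, HasFDerivAt J (J' x) x) (hJ'c : Continuous J')
    (hId : ∀ x, HasFDerivAt I (I' x) x) (hI'c : Continuous I')
    (hJI : ∀ x : X, J x = (1 / 2) * ‖P x‖ ^ 2 - I x)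
    -- (A1)
    (hI0 : I 0 = 0) (hIpos : ∀ x : X, 0 ≤ I x)
    -- (A4)
    (r a : ℝ) (hr : 0 < r)
    (ha_def : a = sInf (J '' {x : X | x ∈ Xp ∧ ‖x‖ = r})) (ha : 0 < a)
    -- (A5) : m̂(u) is the unique nontrivial critical point of J|_{X(u)} in X̂(u), and the
    -- unique global maximum of J on X̂(u)
    (m : X → X)
    (hm_mem : ∀ u ∉ Xt, ∃ t : ℝ, 0 ≤ t ∧ ∃ v ∈ Xt, m u = t • u + v)
    (hm_ne : ∀ u ∉ Xt, m u ≠ 0)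
    (hm_crit : ∀ u ∉ Xt, ∀ z : X, (∃ t : ℝ, ∃ v ∈ Xt, z = t • u + v) → J' (m u) z = 0)
    (hm_unique : ∀ u ∉ Xt, ∀ w : X, (∃ t : ℝ, 0 ≤ t ∧ ∃ v ∈ Xt, w = t • u + v) → w ≠ 0 →
      (∀ z : X, (∃ t : ℝ, ∃ v ∈ Xt, z = t • u + v) → J' w z = 0) → w = m u)
    (hm_max : ∀ u ∉ Xt, ∀ w : X, (∃ t : ℝ, 0 ≤ t ∧ ∃ v ∈ Xt, w = t • u + v) →
      w ≠ m u → J w < J (m u))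
    :
    0 < a ∧ J 0 = 0 ∧
    ∀ u ∈ {u : X | u ∉ Xt ∧ J' u u = 0 ∧ ∀ v ∈ Xt, J' u v = 0}, a ≤ J u := by
  refine ⟨ha, ?_, ?_⟩
  · rw [hJI]; simp [hI0]
  · rintro u ⟨hu, hc1, hc2⟩
    -- u = m u
    have hu0 : u ≠ 0 := fun h => hu (h ▸ Xt.zero_mem)
    have hum : u = m u := by
      apply hm_unique u hu u ⟨1, zero_le_one, 0, Xt.zero_mem, by simp⟩ hu0
      rintro z ⟨t, v, hv, rfl⟩
      simp [hc2 v hv, hc1]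
    -- P u ≠ 0
    have hPu : P u ≠ 0 := by
      intro h
      apply hu
      have := hQm u
      rwa [h, sub_zero] at this
    have hPun : (0:ℝ) < ‖P u‖ := norm_pos_iff.mpr hPu
    set s : ℝ := r / ‖P u‖ with hs
    have hspos : 0 < s := div_pos hr hPun
    set w : X := s • P u with hw
    have hwXp : w ∈ Xp := Xp.smul_mem s (hPm u)
    have hwn : ‖w‖ = r := by
      rw [hw, norm_smul, Real.norm_eq_abs, abs_of_pos hspos, hs,
        div_mul_cancel₀ _ (ne_of_gt hPun)]
    -- a ≤ J w
    have haw : a ≤ J w := by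
      have hmem : J w ∈ J '' {x : X | x ∈ Xp ∧ ‖x‖ = r} := ⟨w, ⟨hwXp, hwn⟩, rfl⟩
      by_cases hb : BddBelow (J '' {x : X | x ∈ Xp ∧ ‖x‖ = r})
      · rw [ha_def]; exact csInf_le hb hmem
      · exfalso
        rw [ha_def, Real.sInf_of_not_bddBelow hb] at ha
        exact lt_irrefl _ ha
    -- w ∈ X̂(u)
    have hwhat : ∃ t : ℝ, 0 ≤ t ∧ ∃ v ∈ Xt, w = t • u + v := by
      refine ⟨s, le_of_lt hspos, (-s) • (u - P u), Xt.smul_mem _ (hQm u), ?_⟩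
      rw [hw, neg_smul, smul_sub]
      abel
    -- J w ≤ J (m u) = J u
    have : J w ≤ J (m u) := by
      by_cases hwm : w = m u
      · exact le_of_eq (by rw [hwm])
      · exact le_of_lt (hm_max u hu w hwhat hwm)
    rw [← hum] at this
    exact le_trans haw this
end

section
/- Assume X⁺ is a Hilbert space whose scalar product satisfies ⟨u,u⟩ = ‖u‖² for all u ∈ X⁺, and assume (B3). If u ∈ X∖X̃ is a critical point of the restriction of J to X(u), i.e. J'(u)[z] = 0 for all z ∈ X(u), then u is the unique global maximum of J on X(u): J(tu + v) < J(u) for every t ≥ 0 and v ∈ X̃ with tu + v ≠ u. -/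
/-!
Since `J + I = ½‖P ·‖²` and `P` kills `X̃`, differentiating `J + I` along the line through `u`
in the direction `u`, resp. in a direction `v ∈ X̃`, gives `J'(u)[u] + I'(u)[u] = ‖Pu‖²` and
`J'(u)[v] + I'(u)[v] = 0`. At a critical point of `J|_{X(u)}` this yields `I'(u)[u] = ‖Pu‖²` and
`I'(u)[v] = 0`, and with these values (B3) at `u` is exactly `J(tu + v) - J(u) < 0`.
-/

theorem HasLineDerivAt.comp_linearMap {𝕜 E E' F : Type*} [NontriviallyNormedField 𝕜]
    [AddCommGroup E] [Module 𝕜 E] [AddCommGroup E'] [Module 𝕜 E']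
    [NormedAddCommGroup F] [NormedSpace 𝕜 F] {f : E → F} {f' : F} {x v : E'}
    (L : E' →ₗ[𝕜] E) (hf : HasLineDerivAt 𝕜 f f' (L x) (L v)) :
    HasLineDerivAt 𝕜 (f ∘ L) f' x v := by
  simpa [HasLineDerivAt] using hf

theorem hasLineDerivAt_sq_norm_self {E : Type*} [NormedAddCommGroup E] [NormedSpace ℝ E]
    (y : E) : HasLineDerivAt ℝ (fun x : E ↦ ‖x‖ ^ 2) (2 * ‖y‖ ^ 2) y y := by
  have hline : (fun s : ℝ ↦ ‖y + s • y‖ ^ 2) = fun s ↦ (1 + s) ^ 2 * ‖y‖ ^ 2 := by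
    funext s
    rw [show y + s • y = (1 + s) • y by module, norm_smul, mul_pow, Real.norm_eq_abs, sq_abs]
  have hderiv : HasDerivAt (fun s : ℝ ↦ (1 + s) ^ 2 * ‖y‖ ^ 2) (2 * ‖y‖ ^ 2) 0 := by
    simpa using (((hasDerivAt_id (0 : ℝ)).const_add 1).pow 2).mul_const (‖y‖ ^ 2)
  unfold HasLineDerivAt
  rwa [hline]

section CriticalPoint

variable {X : Type*} [NormedAddCommGroup X] [NormedSpace ℝ X] {P : X →L[ℝ] X}
  {J I : X → ℝ} {J' I' : X →L[ℝ] ℝ} {u : X}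

theorem add_apply_eq_of_hasLineDerivAt_half_sq_norm (hJ : HasFDerivAt J J' u)
    (hI : HasFDerivAt I I' u) (hJI : ∀ x, J x = 1 / 2 * ‖P x‖ ^ 2 - I x) {w : X} {d : ℝ}
    (hd : HasLineDerivAt ℝ (fun x ↦ 1 / 2 * ‖P x‖ ^ 2) d u w) : J' w + I' w = d := by
  have hsum : J + I = fun x ↦ 1 / 2 * ‖P x‖ ^ 2 := by
    funext x
    simp only [Pi.add_apply, hJI]
    ring
  have := (hJ.add hI).hasLineDerivAt w
  rw [hsum] at this
  exact this.unique hd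

theorem hasLineDerivAt_half_sq_norm_self (u : X) :
    HasLineDerivAt ℝ (fun x ↦ 1 / 2 * ‖P x‖ ^ 2) (‖P u‖ ^ 2) u u := by
  have h : HasDerivAt (fun s : ℝ ↦ ‖P (u + s • u)‖ ^ 2) (2 * ‖P u‖ ^ 2) 0 :=
    (hasLineDerivAt_sq_norm_self (P u)).comp_linearMap (P : X →ₗ[ℝ] X)
  show HasDerivAt (fun s : ℝ ↦ 1 / 2 * ‖P (u + s • u)‖ ^ 2) _ 0
  exact (h.const_mul (1 / 2)).congr_deriv (by ring)

theorem hasLineDerivAt_half_sq_norm_of_map_eq_zero {w : X} (hw : P w = 0) (u : X) :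
    HasLineDerivAt ℝ (fun x ↦ 1 / 2 * ‖P x‖ ^ 2) 0 u w := by
  have : HasLineDerivAt ℝ (fun y : X ↦ 1 / 2 * ‖y‖ ^ 2) 0 (P u) (P w) := hw ▸ hasLineDerivAt_zero
  exact this.comp_linearMap (P : X →ₗ[ℝ] X)

end CriticalPoint

theorem critical_point_unique_max_general
    {X : Type*} [NormedAddCommGroup X] [NormedSpace ℝ X]
    -- topological direct sum decomposition X = X⁺ ⊕ X̃, with projection P onto X⁺ along X̃
    (Xt : Submodule ℝ X)
    (P : X →L[ℝ] X)
    (hPt : ∀ x ∈ Xt, P x = 0)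
    -- J, I of class C¹ with J(u) = ½‖u⁺‖² - I(u)
    (J I : X → ℝ) (J' I' : X → X →L[ℝ] ℝ)
    (hJd : ∀ x, HasFDerivAt J (J' x) x)
    (hId : ∀ x, HasFDerivAt I (I' x) x)
    (hJI : ∀ x : X, J x = (1 / 2) * ‖P x‖ ^ 2 - I x)
    -- (B3)
    (hB3 : ∀ (u : X) (t : ℝ) (v : X), 0 ≤ t → v ∈ Xt → t • u + v ≠ u →
      ((t ^ 2 - 1) / 2) * I' u u + t * I' u v + I u - I (t • u + v) < 0)
    -- u ∈ X∖X̃ is a critical point of J restricted to X(u)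
    (u : X)
    (hcrit : ∀ z : X, (∃ t : ℝ, ∃ v ∈ Xt, z = t • u + v) → J' u z = 0) :
    ∀ (t : ℝ), 0 ≤ t → ∀ v ∈ Xt, t • u + v ≠ u → J (t • u + v) < J u := by
  intro t ht v hv hne
  have hIu : I' u u = ‖P u‖ ^ 2 := by
    have := add_apply_eq_of_hasLineDerivAt_half_sq_norm (hJd u) (hId u) hJI
      (hasLineDerivAt_half_sq_norm_self u)
    rw [hcrit u ⟨1, 0, Xt.zero_mem, by simp⟩] at this
    linarith
  have hIv : I' u v = 0 := by
    have := add_apply_eq_of_hasLineDerivAt_half_sq_norm (hJd u) (hId u) hJI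
      (hasLineDerivAt_half_sq_norm_of_map_eq_zero (hPt v hv) u)
    rw [hcrit v ⟨0, v, hv, by simp⟩] at this
    linarith
  have hB := hB3 u t v ht hv hne
  rw [hIu, hIv] at hB
  have hP : P (t • u + v) = t • P u := by rw [map_add, map_smul, hPt v hv, add_zero]
  rw [hJI, hJI u, hP, norm_smul, Real.norm_eq_abs, mul_pow, sq_abs]
  linarith

/-- If `X⁺` is a Hilbert space whose scalar product generates the norm and
(B3) holds, then any critical point `u ∈ X∖X̃` of `J|_{X(u)}` is the unique global maximum
of `J` on `X̂(u)`: `J(tu + v) < J(u)` for all `t ≥ 0`, `v ∈ X̃` with `tu + v ≠ u`. -/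
theorem critical_point_unique_max
    {X : Type*} [NormedAddCommGroup X] [NormedSpace ℝ X] [CompleteSpace X]
    -- X is reflexive
    (hrefl : Function.Surjective (NormedSpace.inclusionInDoubleDual ℝ X))
    -- topological direct sum decomposition X = X⁺ ⊕ X̃, with projection P onto X⁺ along X̃
    (Xp Xt : Submodule ℝ X)
    (hXpcl : IsClosed (Xp : Set X)) (hXtcl : IsClosed (Xt : Set X))
    (P : X →L[ℝ] X)
    (hPm : ∀ x : X, P x ∈ Xp) (hQm : ∀ x : X, x - P x ∈ Xt)
    (hPp : ∀ x ∈ Xp, P x = x) (hPt : ∀ x ∈ Xt, P x = 0)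
    -- ‖u‖² = ‖u⁺‖² + ‖ũ‖²
    (hnorm : ∀ x : X, ‖x‖ ^ 2 = ‖P x‖ ^ 2 + ‖x - P x‖ ^ 2)
    -- J, I of class C¹ with J(u) = ½‖u⁺‖² - I(u)
    (J I : X → ℝ) (J' I' : X → X →L[ℝ] ℝ)
    (hJd : ∀ x, HasFDerivAt J (J' x) x) (hJ'c : Continuous J')
    (hId : ∀ x, HasFDerivAt I (I' x) x) (hI'c : Continuous I')
    (hJI : ∀ x : X, J x = (1 / 2) * ‖P x‖ ^ 2 - I x)
    -- X⁺ is a Hilbert space with ⟨u,u⟩ = ‖u‖² (parallelogram law on X⁺)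
    (hpar : ∀ u ∈ Xp, ∀ v ∈ Xp, ‖u + v‖ ^ 2 + ‖u - v‖ ^ 2 = 2 * ‖u‖ ^ 2 + 2 * ‖v‖ ^ 2)
    -- (B3)
    (hB3 : ∀ (u : X) (t : ℝ) (v : X), 0 ≤ t → v ∈ Xt → t • u + v ≠ u →
      ((t ^ 2 - 1) / 2) * I' u u + t * I' u v + I u - I (t • u + v) < 0)
    -- u ∈ X∖X̃ is a critical point of J restricted to X(u)
    (u : X) (hu : u ∉ Xt)
    (hcrit : ∀ z : X, (∃ t : ℝ, ∃ v ∈ Xt, z = t • u + v) → J' u z = 0) :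
    ∀ (t : ℝ), 0 ≤ t → ∀ v ∈ Xt, t • u + v ≠ u → J (t • u + v) < J u :=
  critical_point_unique_max_general Xt P hPt J I J' I' hJd hId hJI hB3 u hcrit
end

section
/- Let p > 2, d > 0 and let F : ℝ³ → ℝ be differentiable and convex with gradient f = ∇F, satisfying F(0) = 0 and: (F4) ½⟨f(u),u⟩ > F(u) ≥ d|u|^p for every u ≠ 0; (F7) whenever ⟨f(u),v⟩ = ⟨f(v),u⟩ ≠ 0 one has F(u) − F(v) ≤ (⟨f(u),u⟩² − ⟨f(u),v⟩²)/(2⟨f(u),u⟩), with strict inequality if in addition F(u) ≠ F(v). Then for every u ∈ ℝ³ with u ≠ 0, every z ∈ ℝ³ and every t ≥ 0, the quantity φ(t) := ⟨f(u), ((t²−1)/2)·u + t·z⟩ + F(u) − F(tu + z) satisfies φ(t) ≤ 0, and φ(t) < 0 whenever t ≠ 1. -/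
/-!
Along the line `t ↦ t • u + z` the function `φ = nehariPhi F f u z` is differentiable, negative
at `0` (since `F ≥ 0` and `2 F(u) < ⟪f u, u⟫`) and tends to `-∞`, because `F` grows like
`‖·‖ ^ p` with `p > 2`; hence it attains its maximum on `[0, ∞)`. At a positive local maximum `t`,
`φ'(t) = ⟪f u, w⟫ - ⟪f w, u⟫ = 0` for `w = t • u + z`, which is the symmetry hypothesis of (F7),
and completing the square in `t` then gives `φ(t) ≤ 0`, strictly unless `t = 1`. A zero of `φ` at
some `t ≠ 1` would itself be a positive maximum, so it cannot exist.
-/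

open Filter Set
open scoped RealInnerProductSpace

theorem tendsto_mul_sq_sub_mul_rpow_atBot (M : ℝ) {c p : ℝ} (hc : 0 < c) (hp : 2 < p) :
    Tendsto (fun s : ℝ => M * s ^ 2 - c * s ^ p) atTop atBot := by
  have hfactor : (fun s : ℝ => s ^ 2 * (M - c * s ^ (p - 2))) =ᶠ[atTop]
      fun s => M * s ^ 2 - c * s ^ p := by
    filter_upwards [eventually_gt_atTop 0] with s hs
    rw [Real.rpow_sub hs, Real.rpow_two]
    field_simp
  refine Tendsto.congr' hfactor ((tendsto_pow_atTop two_ne_zero).atTop_mul_atBot₀ ?_)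
  exact tendsto_atBot_add_const_left _ M
    (tendsto_neg_atTop_atBot.comp ((tendsto_rpow_atTop (by linarith)).const_mul_atTop hc))

theorem nonpos_of_forall_isLocalMax {ψ : ℝ → ℝ} {a : ℝ} (hψ : Continuous ψ)
    (h₀ : ψ 0 < 0) (htop : Tendsto ψ atTop atBot)
    (hmax : ∀ s, 0 < s → IsLocalMax ψ s → ψ s ≤ 0 ∧ (s ≠ a → ψ s < 0))
    {t : ℝ} (ht : 0 ≤ t) : ψ t ≤ 0 ∧ (t ≠ a → ψ t < 0) := by
  have isLocalMax_of_isMaxOn : ∀ s, 0 < s → IsMaxOn ψ (Ici 0) s → IsLocalMax ψ s :=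
    fun s hs h => h.isLocalMax (Ici_mem_nhds hs)
  have hnonpos : ∀ t ∈ Ici (0 : ℝ), ψ t ≤ 0 := by
    obtain ⟨t₀, ht₀, hmax₀⟩ : ∃ t₀ ∈ Ici (0 : ℝ), IsMaxOn ψ (Ici 0) t₀ := by
      refine hψ.continuousOn.exists_isMaxOn' isClosed_Ici self_mem_Ici ?_
      rw [cocompact_eq_atBot_atTop, inf_sup_right, (disjoint_atBot_principal_Ici 0).eq_bot,
        bot_sup_eq]
      exact (htop.eventually_le_atBot _).filter_mono inf_le_left
    intro t ht
    refine (hmax₀ ht).trans ?_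
    rcases (mem_Ici.mp ht₀).eq_or_lt with rfl | hpos
    · exact h₀.le
    · exact (hmax t₀ hpos (isLocalMax_of_isMaxOn t₀ hpos hmax₀)).1
  refine ⟨hnonpos t ht, fun hta => (hnonpos t ht).lt_of_ne fun hzero => ?_⟩
  have hpos : 0 < t := ht.lt_of_ne (by rintro rfl; exact h₀.ne hzero)
  have htmax : IsMaxOn ψ (Ici 0) t := fun s hs => hzero ▸ hnonpos s hs
  exact (hmax t hpos (isLocalMax_of_isMaxOn t hpos htmax)).2 hta |>.ne hzero

/-- The value of `nehariPhi` at a critical point `t`, written through `A = ⟪f u, u⟫`,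
`B = ⟪f u, t • u + z⟫`, `a = F u` and `b = F (t • u + z)`. -/
theorem critical_value_nonpos {A B a b t : ℝ} (ha : 0 ≤ a) (hb : 0 ≤ b) (hA : 2 * a < A)
    (ht : 0 ≤ t)
    (hF7 : B ≠ 0 → a - b ≤ (A ^ 2 - B ^ 2) / (2 * A) ∧
      (a ≠ b → a - b < (A ^ 2 - B ^ 2) / (2 * A))) :
    t * B - (t ^ 2 + 1) / 2 * A + (a - b) ≤ 0 ∧
      (t ≠ 1 → t * B - (t ^ 2 + 1) / 2 * A + (a - b) < 0) := by
  have hApos : 0 < A := by linarith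
  rcases eq_or_ne B 0 with rfl | hB
  · have hneg : t * 0 - (t ^ 2 + 1) / 2 * A + (a - b) < 0 := by nlinarith
    exact ⟨hneg.le, fun _ => hneg⟩
  obtain ⟨hle, hlt⟩ := hF7 hB
  have hsq : t * B - (t ^ 2 + 1) / 2 * A + (A ^ 2 - B ^ 2) / (2 * A)
      = -((B - t * A) ^ 2 / (2 * A)) := by
    field_simp
    ring
  have hsq_nonneg : 0 ≤ (B - t * A) ^ 2 / (2 * A) := by positivity
  refine ⟨by linarith, fun ht1 => ?_⟩
  rcases eq_or_ne a b with rfl | hab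
  · have hBA : B ≤ A := by
      have : B ^ 2 ≤ A ^ 2 := by
        rw [sub_self, div_nonneg_iff] at hle
        rcases hle with ⟨h, -⟩ | ⟨-, h⟩ <;> linarith
      exact le_of_sq_le_sq this hApos.le
    have htB : t * B ≤ t * A := mul_le_mul_of_nonneg_left hBA ht
    have hgap : 0 < (t - 1) ^ 2 * A :=
      mul_pos (sq_pos_of_ne_zero (sub_ne_zero.mpr ht1)) hApos
    nlinarith
  · linarith [hlt hab]

theorem eventually_mul_le_norm_smul_add {E : Type*} [NormedAddCommGroup E] [NormedSpace ℝ E]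
    {u : E} (hu : u ≠ 0) (z : E) : ∀ᶠ s : ℝ in atTop, s * (‖u‖ / 2) ≤ ‖s • u + z‖ := by
  have hu' : 0 < ‖u‖ := norm_pos_iff.mpr hu
  filter_upwards [eventually_ge_atTop (2 * ‖z‖ / ‖u‖), eventually_ge_atTop 0]
    with s hs hs₀
  rw [div_le_iff₀ hu'] at hs
  have := norm_sub_le_norm_add (s • u) z
  rw [norm_smul, Real.norm_of_nonneg hs₀] at this
  linarith

section Nehari

variable {E : Type*} [NormedAddCommGroup E] [InnerProductSpace ℝ E]
  {F : E → ℝ} {f : E → E} {u : E}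

noncomputable def nehariPhi (F : E → ℝ) (f : E → E) (u z : E) (t : ℝ) : ℝ :=
  ⟪f u, ((t ^ 2 - 1) / 2) • u + t • z⟫ + F u - F (t • u + z)

theorem nehariPhi_eq (z : E) (t : ℝ) :
    nehariPhi F f u z t =
      (t ^ 2 - 1) / 2 * ⟪f u, u⟫ + t * ⟪f u, z⟫ + F u - F (t • u + z) := by
  simp only [nehariPhi, inner_add_right, real_inner_smul_right]

theorem hasDerivAt_nehariPhi [CompleteSpace E] (hF : ∀ w, HasGradientAt F (f w) w)
    (z : E) (t : ℝ) :
    HasDerivAt (nehariPhi F f u z) (⟪f u, t • u + z⟫ - ⟪f (t • u + z), u⟫) t := by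
  have hline : HasDerivAt (fun s : ℝ => s • u + z) u t :=
    ((hasDerivAt_id t).smul_const u).add_const z |>.congr_deriv (one_smul ℝ u)
  have hquad : HasDerivAt (fun s : ℝ => ((s ^ 2 - 1) / 2) • u + s • z) (t • u + z) t := by
    refine (((hasDerivAt_pow 2 t).sub_const 1).div_const 2).smul_const u |>.add
      ((hasDerivAt_id t).smul_const z) |>.congr_deriv ?_
    norm_num
  refine ((hasDerivAt_const t (f u)).inner ℝ hquad).add_const (F u) |>.sub
    ((hF (t • u + z)).hasFDerivAt.comp_hasDerivAt t hline) |>.congr_deriv ?_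
  simp

theorem nehariPhi_zero_neg (hF : ∀ w, 0 ≤ F w) (hu : 2 * F u < ⟪f u, u⟫) (z : E) :
    nehariPhi F f u z 0 < 0 := by
  rw [nehariPhi_eq, zero_smul, zero_add]
  linarith [hF z]

theorem tendsto_nehariPhi_atBot {p d : ℝ} (hp : 2 < p) (hd : 0 < d)
    (hF : ∀ w, w ≠ 0 → d * ‖w‖ ^ p ≤ F w) (hu : u ≠ 0) (z : E) :
    Tendsto (nehariPhi F f u z) atTop atBot := by
  have hc : 0 < d * (‖u‖ / 2) ^ p := by
    have := norm_pos_iff.mpr hu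
    positivity
  refine tendsto_atBot_mono' _ ?_ (tendsto_mul_sq_sub_mul_rpow_atBot
    (|⟪f u, u⟫| + |⟪f u, z⟫| + |F u|) hc hp)
  filter_upwards [eventually_ge_atTop 1, eventually_mul_le_norm_smul_add hu z] with s hs₁ hs
  have hquad : (s ^ 2 - 1) / 2 * ⟪f u, u⟫ + s * ⟪f u, z⟫ + F u ≤
      (|⟪f u, u⟫| + |⟪f u, z⟫| + |F u|) * s ^ 2 := by
    have hs₂ : 1 ≤ s ^ 2 := one_le_pow₀ hs₁
    have hA : (s ^ 2 - 1) / 2 * ⟪f u, u⟫ ≤ |⟪f u, u⟫| * s ^ 2 := by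
      nlinarith [mul_le_mul_of_nonneg_left (le_abs_self ⟪f u, u⟫)
          (by linarith : 0 ≤ s ^ 2 - 1),
        mul_nonneg (by positivity : 0 ≤ s ^ 2 + 1) (abs_nonneg ⟪f u, u⟫)]
    have hB : s * ⟪f u, z⟫ ≤ |⟪f u, z⟫| * s ^ 2 := by
      nlinarith [mul_le_mul_of_nonneg_left (le_abs_self ⟪f u, z⟫) (by linarith : 0 ≤ s),
        mul_nonneg (by nlinarith : 0 ≤ s ^ 2 - s) (abs_nonneg ⟪f u, z⟫)]
    have hC : F u ≤ |F u| * s ^ 2 := by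
      nlinarith [le_abs_self (F u), mul_nonneg (by linarith : 0 ≤ s ^ 2 - 1) (abs_nonneg (F u))]
    linarith
  have hne : s • u + z ≠ 0 := by
    rw [← norm_pos_iff]
    exact (by positivity : 0 < s * (‖u‖ / 2)).trans_le hs
  have hgrowth : d * (‖u‖ / 2) ^ p * s ^ p ≤ F (s • u + z) :=
    calc d * (‖u‖ / 2) ^ p * s ^ p = d * (s * (‖u‖ / 2)) ^ p := by
          rw [Real.mul_rpow (by linarith) (by positivity)]; ring
      _ ≤ d * ‖s • u + z‖ ^ p := by gcongr
      _ ≤ F (s • u + z) := hF _ hne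
  rw [nehariPhi_eq]
  linarith

theorem nehariPhi_nonpos_of_isLocalMax [CompleteSpace E] (hF : ∀ w, HasGradientAt F (f w) w)
    (hF_nonneg : ∀ w, 0 ≤ F w) (hu : 2 * F u < ⟪f u, u⟫)
    (hF7 : ∀ v : E, ⟪f u, v⟫ = ⟪f v, u⟫ → ⟪f u, v⟫ ≠ 0 →
      F u - F v ≤ (⟪f u, u⟫ ^ 2 - ⟪f u, v⟫ ^ 2) / (2 * ⟪f u, u⟫) ∧
      (F u ≠ F v → F u - F v < (⟪f u, u⟫ ^ 2 - ⟪f u, v⟫ ^ 2) / (2 * ⟪f u, u⟫)))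
    {z : E} {t : ℝ} (ht : 0 ≤ t) (hmax : IsLocalMax (nehariPhi F f u z) t) :
    nehariPhi F f u z t ≤ 0 ∧ (t ≠ 1 → nehariPhi F f u z t < 0) := by
  set w := t • u + z
  have hsymm : ⟪f u, w⟫ = ⟪f w, u⟫ :=
    sub_eq_zero.mp (hmax.hasDerivAt_eq_zero (hasDerivAt_nehariPhi hF z t))
  have hval :
      nehariPhi F f u z t = t * ⟪f u, w⟫ - (t ^ 2 + 1) / 2 * ⟪f u, u⟫ + (F u - F w) := by
    simp only [nehariPhi_eq, w, inner_add_right, real_inner_smul_right]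
    ring
  rw [hval]
  exact critical_value_nonpos (hF_nonneg u) (hF_nonneg w) hu ht (hF7 w hsymm)

end Nehari

theorem nehari_key_inequality_general (p d : ℝ) (hp : 2 < p) (hd : 0 < d)
    (F : EuclideanSpace ℝ (Fin 3) → ℝ)
    (f : EuclideanSpace ℝ (Fin 3) → EuclideanSpace ℝ (Fin 3))
    (hFdiff : ∀ u, HasGradientAt F (f u) u)
    (hF0 : F 0 = 0)
    -- (F4)
    (hF4 : ∀ u : EuclideanSpace ℝ (Fin 3), u ≠ 0 →
      d * ‖u‖ ^ p ≤ F u ∧ F u < (1 / 2) * ⟪f u, u⟫)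
    -- (F7)
    (hF7 : ∀ u v : EuclideanSpace ℝ (Fin 3),
      ⟪f u, v⟫ = ⟪f v, u⟫ → ⟪f u, v⟫ ≠ 0 →
      F u - F v ≤ (⟪f u, u⟫ ^ 2 - ⟪f u, v⟫ ^ 2) / (2 * ⟪f u, u⟫) ∧
      (F u ≠ F v →
        F u - F v < (⟪f u, u⟫ ^ 2 - ⟪f u, v⟫ ^ 2) / (2 * ⟪f u, u⟫))) :
    ∀ u : EuclideanSpace ℝ (Fin 3), u ≠ 0 →
      ∀ (z : EuclideanSpace ℝ (Fin 3)) (t : ℝ), 0 ≤ t →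
        ⟪f u, ((t ^ 2 - 1) / 2) • u + t • z⟫ + F u - F (t • u + z) ≤ 0 ∧
        (t ≠ 1 →
          ⟪f u, ((t ^ 2 - 1) / 2) • u + t • z⟫ + F u - F (t • u + z) < 0) := by
  intro u hu z t ht
  have hF_nonneg : ∀ w, 0 ≤ F w := by
    intro w
    rcases eq_or_ne w 0 with rfl | hw
    · exact hF0.ge
    · exact (by positivity : 0 ≤ d * ‖w‖ ^ p).trans (hF4 w hw).1
  have hFu : 2 * F u < ⟪f u, u⟫ := by linarith [(hF4 u hu).2]
  exact nonpos_of_forall_isLocalMax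
    (continuous_iff_continuousAt.2 fun s => (hasDerivAt_nehariPhi hFdiff z s).continuousAt)
    (nehariPhi_zero_neg hF_nonneg hFu z)
    (tendsto_nehariPhi_atBot hp hd (fun w hw => (hF4 w hw).1) hu z)
    (fun s hs hmax => nehariPhi_nonpos_of_isLocalMax hFdiff hF_nonneg hFu (hF7 u) hs.le hmax) ht

/-- For `F` convex, differentiable with gradient `f`, `F(0) = 0`, satisfying
(F4) and (F7), the quantity `φ(t) = ⟨f(u), ((t²−1)/2)u + tz⟩ + F(u) − F(tu+z)` satisfies
`φ(t) ≤ 0` for all `t ≥ 0`, with strict inequality when `t ≠ 1`, whenever `u ≠ 0`. -/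
theorem nehari_key_inequality (p d : ℝ) (hp : 2 < p) (hd : 0 < d)
    (F : EuclideanSpace ℝ (Fin 3) → ℝ)
    (f : EuclideanSpace ℝ (Fin 3) → EuclideanSpace ℝ (Fin 3))
    (hFdiff : ∀ u, HasGradientAt F (f u) u)
    (hFconv : ConvexOn ℝ Set.univ F)
    (hF0 : F 0 = 0)
    -- (F4)
    (hF4 : ∀ u : EuclideanSpace ℝ (Fin 3), u ≠ 0 →
      d * ‖u‖ ^ p ≤ F u ∧ F u < (1 / 2) * ⟪f u, u⟫)
    -- (F7)
    (hF7 : ∀ u v : EuclideanSpace ℝ (Fin 3),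
      ⟪f u, v⟫ = ⟪f v, u⟫ → ⟪f u, v⟫ ≠ 0 →
      F u - F v ≤ (⟪f u, u⟫ ^ 2 - ⟪f u, v⟫ ^ 2) / (2 * ⟪f u, u⟫) ∧
      (F u ≠ F v →
        F u - F v < (⟪f u, u⟫ ^ 2 - ⟪f u, v⟫ ^ 2) / (2 * ⟪f u, u⟫))) :
    ∀ u : EuclideanSpace ℝ (Fin 3), u ≠ 0 →
      ∀ (z : EuclideanSpace ℝ (Fin 3)) (t : ℝ), 0 ≤ t →
        ⟪f u, ((t ^ 2 - 1) / 2) • u + t • z⟫ + F u - F (t • u + z) ≤ 0 ∧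
        (t ≠ 1 →
          ⟪f u, ((t ^ 2 - 1) / 2) • u + t • z⟫ + F u - F (t • u + z) < 0) :=
  nehari_key_inequality_general p d hp hd F f hFdiff hF0 hF4 hF7
end
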